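/- (Haar) Let K be a compact Hausdorff topological space, let n ≥ 1, and let V be an n-dimensional linear subspace of the Banach space C(K, ℂ) of continuous complex-valued functions on K with the supremum norm. Then V is a Chebyshev subspace of C(K, ℂ) if and only if every non-zero f ∈ V has at most n − 1 zeros, i.e., the set {t ∈ K : f(t) = 0} has at most n − 1 elements. -/

import Mathlib

/-!
Sufficiency. A best approximation exists because `V` is finite-dimensional. If `v₁ ≠ v₂` are two
best approximations of `g`, so is their midpoint `m`, and by strict convexity of the scalars the
values of `g - v₁` and `g - v₂` agree wherever `|g - m|` attains its maximum. This peak set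
therefore lies in the zero set of `v₁ - v₂ ∈ V`, so it has fewer than `n` points, and some `w ∈ V`
interpolates `g - m` on it: evaluation at `n` points is injective, hence bijective, on `V`. Then
`m + ε w` approximates `g` strictly better than `m` for small `ε > 0`.

Necessity. If `f ∈ V \ {0}` vanishes at `n` points `s`, evaluation at them is not injective, hence
not surjective, on `V`, so some `c ≠ 0` satisfies `∑ c_s v(s) = 0` for all `v ∈ V`. By Tietze there
is a `q` with `q(s) = conj c_s / |c_s|`, `‖q‖ ≤ 1` and `‖q - f / ‖f‖‖ ≤ 1`; pairing with `c` shows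
that `q` has distance at least `1` from `V`, so `0` and `f / ‖f‖` are both best approximations.
-/

open Module Set Function
open scoped Finset ComplexConjugate

section BestApproximation

variable {E : Type*} [SeminormedAddCommGroup E]

def IsBestApprox (V : Set E) (x v : E) : Prop := v ∈ V ∧ ∀ w ∈ V, ‖x - v‖ ≤ ‖x - w‖

def IsChebyshev (V : Set E) : Prop := ∀ x, ∃! v, IsBestApprox V x v

end BestApproximation

theorem Submodule.exists_isBestApprox {𝕜 E : Type*} [NontriviallyNormedField 𝕜]
    [LocallyCompactSpace 𝕜] [NormedAddCommGroup E] [NormedSpace 𝕜 E]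
    (V : Submodule 𝕜 E) [FiniteDimensional 𝕜 V] (x : E) : ∃ v, IsBestApprox V x v := by
  have := FiniteDimensional.proper 𝕜 V
  have hfar : ∀ᶠ v : V in Filter.cocompact V, ‖x - ((0 : V) : E)‖ ≤ ‖x - v‖ := by
    filter_upwards [tendsto_norm_cocompact_atTop.eventually_ge_atTop (2 * ‖x‖)] with v hv
    rw [ZeroMemClass.coe_zero, sub_zero, norm_sub_rev]
    linarith [norm_sub_norm_le (v : E) x, Submodule.coe_norm v]
  obtain ⟨v, hv⟩ := (continuous_const.sub continuous_subtype_val).norm.exists_forall_le' 0 hfar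
  exact ⟨v, v.2, fun w hw => hv ⟨w, hw⟩⟩

theorem Continuous.exists_lt_forall_le_of_forall_lt {K : Type*} [TopologicalSpace K]
    [CompactSpace K] {f : K → ℝ} (hf : Continuous f) {d : ℝ} (h : ∀ t, f t < d) :
    ∃ m < d, ∀ t, f t ≤ m := by
  cases isEmpty_or_nonempty K
  · exact ⟨d - 1, by linarith, isEmptyElim⟩
  · obtain ⟨t₁, -, ht₁⟩ := isCompact_univ.exists_isMaxOn univ_nonempty hf.continuousOn
    exact ⟨f t₁, h t₁, fun t => ht₁ (mem_univ t)⟩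

theorem ContinuousMap.exists_norm_sub_smul_lt {K E : Type*} [TopologicalSpace K] [CompactSpace K]
    [NormedAddCommGroup E] [NormedSpace ℝ E] {F w : C(K, E)} (hF : F ≠ 0)
    (hw : ∀ t, ‖F t‖ = ‖F‖ → w t = F t) : ∃ ε : ℝ, 0 < ε ∧ ‖F - ε • w‖ < ‖F‖ := by
  set d := ‖F‖
  have hd : 0 < d := norm_pos_iff.mpr hF
  have hψ : ∀ t, min ‖F t - w t‖ ‖F t‖ < d := by
    intro t
    rcases (F.norm_coe_le_norm t).lt_or_eq with h | h
    · exact (min_le_right _ _).trans_lt h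
    · rw [hw t h, sub_self, norm_zero]
      exact (min_le_left _ _).trans_lt hd
  obtain ⟨m, hm, hmax⟩ :=
    ((F.continuous.sub w.continuous).norm.min F.continuous.norm).exists_lt_forall_le_of_forall_lt hψ
  set ε := min 1 ((d - m) / (‖w‖ + 1))
  have hε : 0 < ε := lt_min one_pos (div_pos (by linarith) (by positivity))
  have hε₁ : ε ≤ 1 := min_le_left _ _
  have hεw : ε * ‖w‖ < d - m := by
    calc ε * ‖w‖ ≤ (d - m) / (‖w‖ + 1) * ‖w‖ := by gcongr; exact min_le_right _ _
      _ < d - m := by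
        rw [div_mul_eq_mul_div, div_lt_iff₀ (by positivity)]
        nlinarith [norm_nonneg w]
  refine ⟨ε, hε, (norm_lt_iff _ hd).mpr fun t => ?_⟩
  rw [sub_apply, smul_apply]
  -- At each point either `‖F - w‖ ≤ m`, so moving towards `w` helps, or `‖F‖ ≤ m`, leaving room.
  rcases min_le_iff.mp (hmax t) with h | h
  · calc ‖F t - ε • w t‖ = ‖(1 - ε) • F t + ε • (F t - w t)‖ := by congr 1; module
      _ ≤ (1 - ε) * d + ε * m := by
        refine norm_add_le_of_le ?_ ?_
        · rw [norm_smul, Real.norm_of_nonneg (by linarith)]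
          exact mul_le_mul_of_nonneg_left (F.norm_coe_le_norm t) (by linarith)
        · rw [norm_smul, Real.norm_of_nonneg hε.le]
          exact mul_le_mul_of_nonneg_left h hε.le
      _ < d := by nlinarith
  · calc ‖F t - ε • w t‖ ≤ ‖F t‖ + ε * ‖w‖ := by
          refine (norm_sub_le _ _).trans (add_le_add_right ?_ _)
          rw [norm_smul, Real.norm_of_nonneg hε.le]
          exact mul_le_mul_of_nonneg_left (w.norm_coe_le_norm t) hε.le
      _ < d := by linarith

theorem LinearMap.exists_ne_zero_sum_mul_eq_zero {𝕜 M ι : Type*} [Field 𝕜] [AddCommGroup M]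
    [Module 𝕜 M] [Fintype ι] {L : M →ₗ[𝕜] (ι → 𝕜)} (hL : ¬Surjective L) :
    ∃ c : ι → 𝕜, c ≠ 0 ∧ ∀ x, ∑ i, c i * L x i = 0 := by
  classical
  obtain ⟨φ, hφ0, hφ⟩ := Submodule.exists_dual_map_eq_bot_of_lt_top
    (lt_top_iff_ne_top.mpr (mt range_eq_top.mp hL)) inferInstance
  set c : ι → 𝕜 := fun i => φ fun j => if i = j then 1 else 0
  have hφc : ∀ y, φ y = ∑ i, c i * y i := fun y => by
    rw [φ.pi_apply_eq_sum_univ y]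
    exact Finset.sum_congr rfl fun i _ => by rw [smul_eq_mul, mul_comm]
  refine ⟨c, fun hc => hφ0 (LinearMap.ext fun y => by simp [hφc, hc]), fun x => ?_⟩
  have : φ (L x) ∈ (range L).map φ := ⟨L x, mem_range_self L x, rfl⟩
  rwa [hφ, Submodule.mem_bot, hφc] at this

section Interpolation

variable {𝕜 K : Type*} [Field 𝕜] [TopologicalSpace 𝕜] [IsTopologicalRing 𝕜] [TopologicalSpace K]

namespace ContinuousMap

def evalOn (S : Finset K) : C(K, 𝕜) →ₗ[𝕜] (S → 𝕜) where
  toFun f s := f s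
  map_add' _ _ := rfl
  map_smul' _ _ := rfl

@[simp]
theorem evalOn_apply (S : Finset K) (f : C(K, 𝕜)) (s : S) : evalOn S f s = f s := rfl

end ContinuousMap

open ContinuousMap

namespace Submodule

variable (V : Submodule 𝕜 C(K, 𝕜))

def IsHaar : Prop := ∀ f ∈ V, f ≠ 0 → {t | f t = 0}.encard < finrank 𝕜 V

theorem finrank_le_card [Fintype K] : finrank 𝕜 V ≤ Fintype.card K := by
  have hinj : Injective ((coeFnLinearMap 𝕜 (M := 𝕜)).comp V.subtype) := fun a b hab =>
    Subtype.ext (DFunLike.coe_injective hab)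
  simpa using LinearMap.finrank_le_finrank_of_injective hinj

theorem exists_superset_card_eq_finrank (S : Finset K) (hS : #S ≤ finrank 𝕜 V) :
    ∃ T, S ⊆ T ∧ #T = finrank 𝕜 V := by
  cases finite_or_infinite K
  · have := Fintype.ofFinite K
    obtain ⟨T, hST, -, hT⟩ :=
      Finset.exists_subsuperset_card_eq S.subset_univ hS (by simpa using V.finrank_le_card)
    exact ⟨T, hST, hT⟩
  · exact Infinite.exists_superset_card_eq S _ hS

variable {V} in
theorem IsHaar.injective_evalOn (hV : V.IsHaar) {T : Finset K} (hT : #T = finrank 𝕜 V) :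
    Injective ((evalOn T).domRestrict V) := by
  rw [← LinearMap.ker_eq_bot, eq_bot_iff]
  rintro ⟨f, hf⟩ hker
  by_contra hf0
  have hTf : (T : Set K) ⊆ {t | f t = 0} := fun t ht => by
    simpa using congr_fun (LinearMap.mem_ker.mp hker) ⟨t, ht⟩
  have := (encard_le_encard hTf).trans_lt (hV f hf (by simpa using hf0))
  simp [hT] at this

variable [FiniteDimensional 𝕜 V]

theorem isHaar_iff : V.IsHaar ↔
    ∀ f ∈ V, f ≠ 0 → {t | f t = 0}.Finite ∧ {t | f t = 0}.ncard ≤ finrank 𝕜 V - 1 := by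
  refine forall₂_congr fun f hf => imp_congr_right fun hf0 => ?_
  obtain ⟨k, hk⟩ : ∃ k, finrank 𝕜 V = k + 1 :=
    Nat.exists_eq_add_one.mpr (finrank_pos_iff_exists_ne_zero.mpr ⟨⟨f, hf⟩, by simpa using hf0⟩)
  rw [hk, Nat.add_sub_cancel, ← encard_le_coe_iff_finite_ncard_le, Nat.cast_add_one,
    ENat.lt_natCast_add_one_iff]

variable {V}

theorem IsHaar.surjective_evalOn (hV : V.IsHaar) {T : Finset K} (hT : #T = finrank 𝕜 V) :
    Surjective ((evalOn T).domRestrict V) :=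
  (LinearMap.injective_iff_surjective_of_finrank_eq_finrank (by simp [hT])).mp
    (hV.injective_evalOn hT)

theorem exists_ne_zero_sum_mul_eq_zero_of_finrank_le_encard {f : C(K, 𝕜)} (hf : f ∈ V)
    (hf0 : f ≠ 0) (hZ : finrank 𝕜 V ≤ {t | f t = 0}.encard) :
    ∃ S : Finset K, (∀ s ∈ S, f s = 0) ∧
      ∃ c : S → 𝕜, c ≠ 0 ∧ ∀ v ∈ V, ∑ s, c s * v s = 0 := by
  obtain ⟨Z, hZf, hZcard⟩ := exists_subset_encard_eq hZ
  have hZfin := finite_of_encard_eq_coe hZcard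
  have hS : #hZfin.toFinset = finrank 𝕜 V := by
    rw [hZfin.encard_eq_coe_toFinset_card] at hZcard
    exact_mod_cast hZcard
  have hfS : ∀ s ∈ hZfin.toFinset, f s = 0 := fun s hs => hZf (hZfin.mem_toFinset.mp hs)
  have hnotsurj : ¬Surjective ((evalOn hZfin.toFinset).domRestrict V) := by
    rw [← LinearMap.injective_iff_surjective_of_finrank_eq_finrank (by simp [hS])]
    intro hinj
    have := hinj (a₁ := ⟨f, hf⟩) (a₂ := 0) (funext fun s => by simpa using hfS s s.2)
    exact hf0 (congr_arg Subtype.val this)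
  obtain ⟨c, hc0, hc⟩ := LinearMap.exists_ne_zero_sum_mul_eq_zero hnotsurj
  exact ⟨_, hfS, c, hc0, fun v hv => by simpa using hc ⟨v, hv⟩⟩

theorem IsHaar.exists_mem_eqOn (hV : V.IsHaar) {E : Set K} (hE : E.encard ≤ finrank 𝕜 V)
    (φ : K → 𝕜) : ∃ w ∈ V, EqOn w φ E := by
  have hEfin := finite_of_encard_le_coe hE
  obtain ⟨T, hET, hT⟩ := V.exists_superset_card_eq_finrank hEfin.toFinset
    (by rwa [← Nat.cast_le (α := ℕ∞), ← encard_coe_eq_coe_finsetCard, hEfin.coe_toFinset])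
  obtain ⟨w, hw⟩ := hV.surjective_evalOn hT fun s => φ s
  exact ⟨w, w.2, fun t ht => by simpa using congr_fun hw ⟨t, hET (hEfin.mem_toFinset.mpr ht)⟩⟩

end Submodule

end Interpolation

section RCLike

variable {𝕜 K : Type*} [RCLike 𝕜] [TopologicalSpace K] [CompactSpace K]

namespace ContinuousMap

theorem exists_extension_norm_le_one_norm_sub_le_one [NormalSpace K] [T1Space K] {h : C(K, 𝕜)}
    (hh : ‖h‖ ≤ 1) {S : Finset K} (hS : ∀ s ∈ S, h s = 0) (σ : S → 𝕜) (hσ : ∀ s, ‖σ s‖ ≤ 1) :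
    ∃ q : C(K, 𝕜), ‖q‖ ≤ 1 ∧ ‖q - h‖ ≤ 1 ∧ ∀ s : S, q s = σ s := by
  obtain ⟨g, hg, hgS⟩ := exists_forall_mem_restrict_eq S.finite_toSet.isClosed
    (⟨σ, continuous_of_discreteTopology⟩ : C((S : Set K), 𝕜)) (t := Metric.closedBall 0 1)
    (by simpa using hσ)
  set a : C(K, ℝ) := ⟨fun t => 1 - ‖h t‖, by fun_prop⟩
  have ha : ∀ t, 0 ≤ a t ∧ a t + ‖h t‖ = 1 := fun t =>
    ⟨sub_nonneg.mpr ((h.norm_coe_le_norm t).trans hh), by simp [a]⟩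
  have hq : ∀ t, ‖(a • g) t‖ ≤ a t := fun t => by
    rw [smul_apply', norm_smul, Real.norm_of_nonneg (ha t).1]
    exact mul_le_of_le_one_right (ha t).1 (by simpa using hg t)
  refine ⟨a • g, (norm_le _ zero_le_one).mpr fun t => ?_, (norm_le _ zero_le_one).mpr fun t => ?_,
    fun s => ?_⟩
  · linarith [hq t, ha t, norm_nonneg (h t)]
  · exact (norm_sub_le _ _).trans (by linarith [hq t, ha t])
  · have hgs : g s = σ s := DFunLike.congr_fun hgS s
    simp [a, hS s s.2, hgs]

theorem one_le_norm_sub_of_sum_mul_eq_zero {S : Finset K} {c : S → 𝕜} (hc : c ≠ 0)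
    {q w : C(K, 𝕜)} (hq : ∀ s, c s * q s = ‖c s‖) (hw : ∑ s, c s * w s = 0) : 1 ≤ ‖q - w‖ := by
  set α := ∑ s, ‖c s‖
  have hα : 0 < α := by
    obtain ⟨s, hs⟩ := Function.ne_iff.mp hc
    exact Finset.sum_pos' (fun _ _ => norm_nonneg _) ⟨s, Finset.mem_univ _, norm_pos_iff.mpr hs⟩
  refine (le_mul_iff_one_le_right hα).mp ?_
  calc α = ‖∑ s, c s * (q - w) s‖ := by
        simp only [sub_apply, mul_sub, Finset.sum_sub_distrib, hq, hw, sub_zero]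
        rw [← RCLike.ofReal_sum, RCLike.norm_of_nonneg hα.le]
    _ ≤ ∑ s, ‖c s‖ * ‖q - w‖ := (norm_sum_le _ _).trans <| Finset.sum_le_sum fun s _ => by
        rw [norm_mul]
        exact mul_le_mul_of_nonneg_left (norm_coe_le_norm _ _) (norm_nonneg _)
    _ = α * ‖q - w‖ := Finset.sum_mul ..|>.symm

end ContinuousMap

open ContinuousMap

namespace Submodule

variable {V : Submodule 𝕜 C(K, 𝕜)} [FiniteDimensional 𝕜 V]

theorem IsHaar.of_isChebyshev [T2Space K] (hV : IsChebyshev (V : Set C(K, 𝕜))) : V.IsHaar := by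
  intro f hf hf0
  by_contra! hZ
  obtain ⟨S, hfS, c, hc0, hc⟩ := exists_ne_zero_sum_mul_eq_zero_of_finrank_le_encard hf hf0 hZ
  obtain ⟨q, hq, hqh, hqS⟩ := exists_extension_norm_le_one_norm_sub_le_one
    (norm_smul_inv_norm (𝕜 := 𝕜) hf0).le (S := S) (fun s hs => by simp [hfS s hs])
    (fun s => conj (c s) / ‖c s‖) (fun s => by simpa [norm_div] using div_self_le_one _)
  have hcq : ∀ s, c s * q s = ‖c s‖ := fun s => by
    rw [hqS, mul_div_assoc', RCLike.mul_conj, sq, mul_self_div_self]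
  have hbest : ∀ v ∈ V, ‖q - v‖ ≤ 1 → IsBestApprox V q v := fun v hv hqv =>
    ⟨hv, fun w hw => hqv.trans (one_le_norm_sub_of_sum_mul_eq_zero hc0 hcq (hc w hw))⟩
  have := (hV q).unique (hbest 0 V.zero_mem (by rwa [sub_zero])) (hbest _ (V.smul_mem _ hf) hqh)
  exact smul_ne_zero (by simpa using hf0) hf0 this.symm

theorem IsHaar.exists_norm_sub_lt (hV : V.IsHaar) {g v u : C(K, 𝕜)} (hv : v ∈ V) (hu : u ∈ V)
    (hu0 : u ≠ 0) (hgv : g ≠ v) (hpeak : ∀ t, ‖(g - v) t‖ = ‖g - v‖ → u t = 0) :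
    ∃ v' ∈ V, ‖g - v'‖ < ‖g - v‖ := by
  obtain ⟨w, hw, hwE⟩ := hV.exists_mem_eqOn (E := {t | ‖(g - v) t‖ = ‖g - v‖})
    ((encard_le_encard hpeak).trans_lt (hV u hu hu0)).le (g - v)
  obtain ⟨ε, -, hε⟩ := (g - v).exists_norm_sub_smul_lt (sub_ne_zero.mpr hgv) fun t ht => hwE ht
  exact ⟨v + ε • w, V.add_mem hv (V.smul_of_tower_mem ε hw), by rwa [← sub_sub]⟩

theorem IsHaar.isBestApprox_unique (hV : V.IsHaar) {g v₁ v₂ : C(K, 𝕜)}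
    (h₁ : IsBestApprox V g v₁) (h₂ : IsBestApprox V g v₂) : v₁ = v₂ := by
  by_contra hne
  set m : C(K, 𝕜) := (2⁻¹ : ℝ) • (v₁ + v₂)
  have hm : m ∈ V := V.smul_of_tower_mem _ (V.add_mem h₁.1 h₂.1)
  have hgm : g - m = (2⁻¹ : ℝ) • (g - v₁) + (2⁻¹ : ℝ) • (g - v₂) := by simp only [m]; module
  have hd : ‖g - v₂‖ = ‖g - v₁‖ := le_antisymm (h₂.2 _ h₁.1) (h₁.2 _ h₂.1)
  have hmd : ‖g - m‖ = ‖g - v₁‖ := by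
    refine le_antisymm ?_ (h₁.2 m hm)
    rw [hgm]
    refine (norm_add_le _ _).trans ?_
    rw [norm_smul, norm_smul, hd, Real.norm_of_nonneg (by norm_num)]
    linarith
  have hgm0 : g ≠ m := fun h => hne <| by
    have h0 : ‖g - v₁‖ = 0 := by rw [← hmd, h, sub_self, norm_zero]
    exact (sub_eq_zero.mp (norm_eq_zero.mp h0)).symm.trans
      (sub_eq_zero.mp (norm_eq_zero.mp (hd.trans h0)))
  have hpeak : ∀ t, ‖(g - m) t‖ = ‖g - m‖ → (v₁ - v₂) t = 0 := by
    intro t ht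
    by_contra h
    have hne' : (g - v₁) t ≠ (g - v₂) t := by simpa [sub_eq_zero] using h
    have := norm_combo_lt_of_ne ((g - v₁).norm_coe_le_norm t)
      (hd ▸ (g - v₂).norm_coe_le_norm t) hne' (a := 2⁻¹) (b := 2⁻¹) (by norm_num) (by norm_num)
      (by norm_num)
    rw [← hmd, ← ht, hgm] at this
    simp at this
  obtain ⟨v', hv', hlt⟩ :=
    hV.exists_norm_sub_lt hm (V.sub_mem h₁.1 h₂.1) (sub_ne_zero.mpr hne) hgm0 hpeak
  exact (h₁.2 v' hv').not_gt (hmd ▸ hlt)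

theorem IsHaar.isChebyshev (hV : V.IsHaar) : IsChebyshev (V : Set C(K, 𝕜)) := fun g =>
  let ⟨v, hv⟩ := V.exists_isBestApprox g
  ⟨v, hv, fun _ hw => hV.isBestApprox_unique hw hv⟩

end Submodule

end RCLike

theorem haar_chebyshev_iff_zeros_general
    {K : Type*} [TopologicalSpace K] [CompactSpace K] [T2Space K]
    (n : ℕ) (V : Submodule ℂ C(K, ℂ))
    [FiniteDimensional ℂ V] (hdim : Module.finrank ℂ V = n) :
    (∀ g : C(K, ℂ), ∃! v : C(K, ℂ), v ∈ V ∧ ∀ w ∈ V, ‖g - v‖ ≤ ‖g - w‖) ↔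
    (∀ f ∈ V, f ≠ 0 →
      ({t : K | f t = 0}.Finite ∧ {t : K | f t = 0}.ncard ≤ n - 1)) := by
  subst hdim
  rw [← V.isHaar_iff]
  exact ⟨Submodule.IsHaar.of_isChebyshev, Submodule.IsHaar.isChebyshev⟩

/-- (Haar) An `n`-dimensional subspace `V` of `C(K, ℂ)` is a Chebyshev subspace of
`C(K, ℂ)` iff every non-zero `f ∈ V` has at most `n - 1` zeros. -/
theorem haar_chebyshev_iff_zeros
    {K : Type*} [TopologicalSpace K] [CompactSpace K] [T2Space K]
    (n : ℕ) (hn : 1 ≤ n) (V : Submodule ℂ C(K, ℂ))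
    [FiniteDimensional ℂ V] (hdim : Module.finrank ℂ V = n) :
    (∀ g : C(K, ℂ), ∃! v : C(K, ℂ), v ∈ V ∧ ∀ w ∈ V, ‖g - v‖ ≤ ‖g - w‖) ↔
    (∀ f ∈ V, f ≠ 0 →
      ({t : K | f t = 0}.Finite ∧ {t : K | f t = 0}.ncard ≤ n - 1)) :=
  haar_chebyshev_iff_zeros_general n V hdim
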